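/- Fix g ≥ 0 and real numbers b₀ < a₁ < b₁ < ⋯ < a_g < b_g < a₀, points x_j ∈ (a_j,b_j) for j = 1,…,g and x₀ ∈ (a₀,∞), and z ∈ ℂ with Im z > 0. Put T(z) = (z−a₀)(z−b₀)·∏_{j=1}^g (z−a_j)(z−b_j) and U(z) = ∏_{j=0}^g (z−x_j). Then T(z)/U(z)² is a negative real number if and only if ∫_{a₀}^{x₀} dt/|t−z|² + ∑_{j=1}^g ∫_{a_j}^{x_j} dt/|t−z|² = ∫_{x₀}^{∞} dt/|t−z|² + ∫_{−∞}^{b₀} dt/|t−z|² + ∑_{j=1}^g ∫_{x_j}^{b_j} dt/|t−z|². (Equivalently: a holomorphic branch of √T(z)/U(z) on the upper half-plane takes a purely imaginary value at z exactly when the harmonic measures at z of the two halves into which the points x_j divide the gaps coincide.) -/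

import Mathlib

open Complex MeasureTheory intervalIntegral

/-!
For `Im z > 0` the angle `θ t = arg (z - t)` increases from `0` to `π` as `t` runs over `ℝ`, with
`θ' t = Im z / |t - z|²`. Hence every integral in the balance condition is a difference of values
of `θ` divided by `Im z`, and the condition says exactly that
`D = θ a₀ + θ b₀ + ∑ (θ aⱼ + θ bⱼ) - 2 (θ x₀ + ∑ θ xⱼ)` equals `-π`. On the other hand `D` is an
argument of `T(z)/U(z)²`, so the quotient is a negative real iff `D ≡ π mod 2π`. Since the points
interlace, `D ∈ (-2π, 0)`, where `-π` is the only such value.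
-/

lemma norm_ofReal_sub_sq (z : ℂ) (t : ℝ) : ‖(t : ℂ) - z‖ ^ 2 = (t - z.re) ^ 2 + z.im ^ 2 := by
  rw [Complex.sq_norm, normSq_apply]
  simp only [sub_re, ofReal_re, sub_im, ofReal_im]
  ring

section UpperHalfPlane

variable {z : ℂ}

lemma arg_sub_ofReal (hz : 0 < z.im) (t : ℝ) :
    arg (z - t) = Real.pi / 2 + Real.arctan ((t - z.re) / z.im) := by
  set u := (t - z.re) / z.im with hu
  set θ := Real.pi / 2 + Real.arctan u with hθ
  set r := z.im * √(1 + u ^ 2) with hr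
  have hs : 0 < √(1 + u ^ 2) := Real.sqrt_pos.2 (by positivity)
  have hcos : r * Real.cos θ = z.re - t := by
    rw [hθ, add_comm, Real.cos_add_pi_div_two, Real.sin_arctan, hr]
    field_simp
    rw [hu]
    field_simp
    ring
  have hsin : r * Real.sin θ = z.im := by
    rw [hθ, add_comm, Real.sin_add_pi_div_two, Real.cos_arctan, hr]
    field_simp
  have hpolar : z - t = (r : ℂ) * (cos θ + sin θ * I) := by
    rw [← ofReal_cos, ← ofReal_sin, mul_add, ← mul_assoc, ← ofReal_mul, ← ofReal_mul, hcos, hsin]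
    conv_lhs => rw [← re_add_im z]
    push_cast
    ring
  rw [hpolar, arg_mul_cos_add_sin_mul_I (by positivity)]
  constructor <;>
    linarith [Real.pi_pos, Real.neg_pi_div_two_lt_arctan u, Real.arctan_lt_pi_div_two u]

lemma strictMono_arg_sub_ofReal (hz : 0 < z.im) : StrictMono fun t : ℝ => arg (z - t) := by
  intro s t hst
  simp only [arg_sub_ofReal hz, add_lt_add_iff_left]
  exact Real.arctan_strictMono (by gcongr)

lemma arg_sub_ofReal_pos (hz : 0 < z.im) (t : ℝ) : 0 < arg (z - t) := by
  rw [arg_sub_ofReal hz]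
  linarith [Real.neg_pi_div_two_lt_arctan ((t - z.re) / z.im)]

lemma arg_sub_ofReal_lt_pi (hz : 0 < z.im) (t : ℝ) : arg (z - t) < Real.pi := by
  rw [arg_sub_ofReal hz]
  linarith [Real.arctan_lt_pi_div_two ((t - z.re) / z.im)]

lemma hasDerivAt_arg_sub_ofReal_div_im (hz : 0 < z.im) (t : ℝ) :
    HasDerivAt (fun s : ℝ => arg (z - s) / z.im) (1 / ‖(t : ℂ) - z‖ ^ 2) t := by
  simp only [arg_sub_ofReal hz]
  refine ((((Real.hasDerivAt_arctan _).comp t (((hasDerivAt_id t).sub_const z.re).div_const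
    z.im)).const_add (Real.pi / 2)).div_const z.im).congr_deriv ?_
  rw [norm_ofReal_sub_sq, id]
  field_simp
  ring

lemma tendsto_arg_sub_ofReal_atTop (hz : 0 < z.im) :
    Filter.Tendsto (fun s : ℝ => arg (z - s)) Filter.atTop (nhds Real.pi) := by
  have h : Filter.Tendsto (fun s : ℝ => (s - z.re) / z.im) Filter.atTop Filter.atTop :=
    (Filter.tendsto_atTop_add_const_right _ _ Filter.tendsto_id).atTop_div_const hz
  simp only [arg_sub_ofReal hz]
  have := ((Real.tendsto_arctan_atTop.mono_right nhdsWithin_le_nhds).comp h).const_add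
    (Real.pi / 2)
  rwa [add_halves] at this

lemma tendsto_arg_sub_ofReal_atBot (hz : 0 < z.im) :
    Filter.Tendsto (fun s : ℝ => arg (z - s)) Filter.atBot (nhds 0) := by
  have h : Filter.Tendsto (fun s : ℝ => (s - z.re) / z.im) Filter.atBot Filter.atBot :=
    (Filter.tendsto_atBot_add_const_right _ _ Filter.tendsto_id).atBot_div_const hz
  simp only [arg_sub_ofReal hz]
  have := ((Real.tendsto_arctan_atBot.mono_right nhdsWithin_le_nhds).comp h).const_add
    (Real.pi / 2)
  rwa [add_neg_cancel] at this

lemma integrable_inv_norm_ofReal_sub_sq (hz : 0 < z.im) :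
    Integrable fun t : ℝ => 1 / ‖(t : ℂ) - z‖ ^ 2 := by
  have h := ((integrable_inv_one_add_sq.comp_div hz.ne').comp_sub_right z.re).const_mul
    (z.im ^ 2)⁻¹
  refine h.congr (Filter.Eventually.of_forall fun t => ?_)
  simp only [norm_ofReal_sub_sq]
  field_simp
  ring

lemma integral_inv_norm_ofReal_sub_sq (hz : 0 < z.im) (p q : ℝ) :
    ∫ t in p..q, 1 / ‖(t : ℂ) - z‖ ^ 2 = (arg (z - q) - arg (z - p)) / z.im := by
  rw [sub_div]
  exact integral_eq_sub_of_hasDerivAt (fun t _ => hasDerivAt_arg_sub_ofReal_div_im hz t)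
    (integrable_inv_norm_ofReal_sub_sq hz).intervalIntegrable

lemma integral_Ioi_inv_norm_ofReal_sub_sq (hz : 0 < z.im) (p : ℝ) :
    ∫ t in Set.Ioi p, 1 / ‖(t : ℂ) - z‖ ^ 2 = (Real.pi - arg (z - p)) / z.im := by
  rw [sub_div]
  exact integral_Ioi_of_hasDerivAt_of_nonneg' (fun t _ => hasDerivAt_arg_sub_ofReal_div_im hz t)
    (fun t _ => by positivity) ((tendsto_arg_sub_ofReal_atTop hz).div_const z.im)

lemma integral_Iic_inv_norm_ofReal_sub_sq (hz : 0 < z.im) (p : ℝ) :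
    ∫ t in Set.Iic p, 1 / ‖(t : ℂ) - z‖ ^ 2 = arg (z - p) / z.im := by
  have h := integral_Iic_of_hasDerivAt_of_tendsto' (a := p)
    (fun t _ => hasDerivAt_arg_sub_ofReal_div_im hz t)
    (integrable_inv_norm_ofReal_sub_sq hz).integrableOn
    ((tendsto_arg_sub_ofReal_atBot hz).div_const z.im)
  rwa [zero_div, sub_zero] at h

end UpperHalfPlane

theorem Monotone.sum_sub_le_sub_of_interlaced {α β : Type*} [Preorder α] [AddCommGroup β]
    [PartialOrder β] [IsOrderedAddMonoid β] {f : α → β} (hf : Monotone f) :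
    ∀ {n : ℕ} {u v : Fin n → α} {L R : α}, L ≤ R → (∀ j, L ≤ u j) →
      (∀ j k, j < k → v j ≤ u k) → (∀ j, v j ≤ R) → ∑ j, (f (v j) - f (u j)) ≤ f R - f L
  | 0, _, _, _, _, hLR, _, _, _ => by simpa using hf hLR
  | n + 1, u, v, L, R, _, hL, hvu, hR => by
    have htail : ∑ j : Fin n, (f (v j.succ) - f (u j.succ)) ≤ f R - f (v 0) :=
      hf.sum_sub_le_sub_of_interlaced (hR 0) (fun j => hvu 0 j.succ (Fin.succ_pos j))
        (fun j k hjk => hvu j.succ k.succ (Fin.succ_lt_succ_iff.2 hjk)) (fun j => hR j.succ)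
    calc ∑ j, (f (v j) - f (u j))
        = f (v 0) - f (u 0) + ∑ j : Fin n, (f (v j.succ) - f (u j.succ)) := Fin.sum_univ_succ _
      _ ≤ f (v 0) - f (u 0) + (f R - f (v 0)) := add_le_add_right htail _
      _ = f R - f (u 0) := by abel
      _ ≤ f R - f L := sub_le_sub_left (hf (hL 0)) _

lemma arg_prod_coe_angle {ι : Type*} (s : Finset ι) {f : ι → ℂ} (hf : ∀ i ∈ s, f i ≠ 0) :
    (arg (∏ i ∈ s, f i) : Real.Angle) = ∑ i ∈ s, (arg (f i) : Real.Angle) := by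
  classical
  induction s using Finset.induction_on with
  | empty => simp
  | insert i s hi ih =>
    rw [Finset.prod_insert hi, Finset.sum_insert hi,
      arg_mul_coe_angle (hf i (Finset.mem_insert_self i s))
        (Finset.prod_ne_zero_iff.2 fun j hj => hf j (Finset.mem_insert_of_mem hj)),
      ih fun j hj => hf j (Finset.mem_insert_of_mem hj)]

lemma exists_neg_eq_ofReal_iff_arg_coe_angle_eq_pi (w : ℂ) :
    (∃ r : ℝ, r < 0 ∧ w = r) ↔ (arg w : Real.Angle) = Real.pi := by
  rw [arg_coe_angle_eq_iff_eq_toReal, Real.Angle.toReal_pi, arg_eq_pi_iff]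
  constructor
  · rintro ⟨r, hr, rfl⟩
    simpa using hr
  · rintro ⟨hre, him⟩
    exact ⟨w.re, hre, Complex.ext rfl him⟩

open Real in
lemma Real.Angle.coe_eq_pi_iff_of_mem_Ioo {D : ℝ} (hD : D ∈ Set.Ioo (-(2 * π)) 0) :
    (D : Angle) = π ↔ D = -π := by
  have h : ((D + π : ℝ) : Real.Angle).toReal = D + π :=
    Real.Angle.toReal_coe_eq_self_iff.2 ⟨by linarith [hD.1], by linarith [hD.2]⟩
  calc (D : Real.Angle) = π ↔ ((D + π : ℝ) : Real.Angle) = 0 := by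
        rw [Real.Angle.coe_add, ← eq_neg_iff_add_eq_zero, Real.Angle.neg_coe_pi]
    _ ↔ D + π = 0 := by rw [← Real.Angle.toReal_eq_zero_iff, h]
    _ ↔ D = -π := eq_neg_iff_add_eq_zero.symm

lemma interlaced_sum_mem_Ioo {f : ℝ → ℝ} {c : ℝ} (hf : StrictMono f) (hf0 : ∀ t, 0 < f t)
    (hfc : ∀ t, f t < c) {g : ℕ} {b0 a0 x0 : ℝ} {a b x : Fin g → ℝ} (hb0a0 : b0 < a0)
    (hlow : ∀ j, b0 < a j) (hord : ∀ j k : Fin g, j < k → b j < a k) (hhigh : ∀ j, b j < a0)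
    (hx : ∀ j, x j ∈ Set.Ioo (a j) (b j)) (hx0 : a0 < x0) :
    f a0 + f b0 + ∑ j, (f (a j) + f (b j)) - 2 * (f x0 + ∑ j, f (x j)) ∈
      Set.Ioo (-(2 * c)) 0 := by
  have hxa : ∑ j, (f (x j) - f (a j)) ≤ f a0 - f b0 :=
    hf.monotone.sum_sub_le_sub_of_interlaced hb0a0.le (fun j => (hlow j).le)
      (fun j k hjk => ((hx j).2.trans (hord j k hjk)).le) (fun j => ((hx j).2.trans (hhigh j)).le)
  have hbx : ∑ j, (f (b j) - f (x j)) ≤ f a0 - f b0 :=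
    hf.monotone.sum_sub_le_sub_of_interlaced hb0a0.le (fun j => ((hlow j).trans (hx j).1).le)
      (fun j k hjk => ((hord j k hjk).trans (hx k).1).le) (fun j => (hhigh j).le)
  have hxa0 : 0 ≤ ∑ j, (f (x j) - f (a j)) :=
    Finset.sum_nonneg fun j _ => sub_nonneg.2 (hf (hx j).1).le
  have hbx0 : 0 ≤ ∑ j, (f (b j) - f (x j)) :=
    Finset.sum_nonneg fun j _ => sub_nonneg.2 (hf (hx j).2).le
  rw [Finset.sum_sub_distrib] at hxa hbx hxa0 hbx0
  rw [Finset.sum_add_distrib]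
  constructor <;> linarith [hf hx0, hf0 b0, hfc x0]

theorem stmt15_general (g : ℕ) (b0 a0 : ℝ) (a b x : Fin g → ℝ) (x0 : ℝ)
    (hb0a0 : b0 < a0) (hlow : ∀ j, b0 < a j)
    (hord : ∀ j k : Fin g, j < k → b j < a k) (hhigh : ∀ j, b j < a0)
    (hx : ∀ j, x j ∈ Set.Ioo (a j) (b j)) (hx0 : a0 < x0)
    (z : ℂ) (hz : 0 < z.im) :
    (∃ r : ℝ, r < 0 ∧
      ((z - (a0 : ℂ)) * (z - (b0 : ℂ)) * ∏ j, (z - (a j : ℂ)) * (z - (b j : ℂ))) /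
        ((z - (x0 : ℂ)) * ∏ j, (z - (x j : ℂ))) ^ 2 = (r : ℂ)) ↔
    ((∫ t in a0..x0, 1 / ‖(t : ℂ) - z‖ ^ 2) +
        ∑ j, ∫ t in (a j)..(x j), 1 / ‖(t : ℂ) - z‖ ^ 2)
      = ((∫ t in Set.Ioi x0, 1 / ‖(t : ℂ) - z‖ ^ 2) +
          (∫ t in Set.Iic b0, 1 / ‖(t : ℂ) - z‖ ^ 2) +
          ∑ j, ∫ t in (x j)..(b j), 1 / ‖(t : ℂ) - z‖ ^ 2) := by
  have hne : ∀ t : ℝ, z - t ≠ 0 := fun t => sub_ne_zero.2 fun h => hz.ne' (by simp [h])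
  have harg : (arg (((z - a0) * (z - b0) * ∏ j, (z - a j) * (z - b j)) /
      ((z - x0) * ∏ j, (z - x j)) ^ 2) : Real.Angle) =
      ((arg (z - a0) + arg (z - b0) + ∑ j, (arg (z - a j) + arg (z - b j)) -
        2 * (arg (z - x0) + ∑ j, arg (z - x j)) : ℝ) : Real.Angle) := by
    simp only [ne_eq, mul_eq_zero, hne, or_self, false_or, Finset.prod_ne_zero_iff,
      Finset.mem_univ, not_false_eq_true, imp_self, implies_true, OfNat.ofNat_ne_zero,
      pow_eq_zero_iff, arg_div_coe_angle, arg_mul_coe_angle, arg_prod_coe_angle,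
      arg_pow_coe_angle, smul_add, Real.Angle.coe_sub, Real.Angle.coe_add]
    simp only [← Real.Angle.coe_coeHom, map_sum, map_add, two_mul, two_nsmul]
    abel
  rw [exists_neg_eq_ofReal_iff_arg_coe_angle_eq_pi, harg, Real.Angle.coe_eq_pi_iff_of_mem_Ioo
    (interlaced_sum_mem_Ioo (strictMono_arg_sub_ofReal hz) (arg_sub_ofReal_pos hz)
      (arg_sub_ofReal_lt_pi hz) hb0a0 hlow hord hhigh hx hx0)]
  simp only [integral_inv_norm_ofReal_sub_sq hz, integral_Ioi_inv_norm_ofReal_sub_sq hz,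
    integral_Iic_inv_norm_ofReal_sub_sq hz, ← Finset.sum_div, ← add_div,
    div_left_inj' hz.ne', Finset.sum_sub_distrib, Finset.sum_add_distrib]
  constructor <;> intro h <;> linarith

/-- For `z` in the upper half-plane and gap points `x_j ∈ (a_j,b_j)`, `x₀ ∈ (a₀,∞)`, the
value `T(z)/U(z)²` is a negative real number iff the harmonic-measure balance condition
`∫_{a₀}^{x₀} dt/|t−z|² + ∑_j ∫_{a_j}^{x_j} dt/|t−z|²
  = ∫_{x₀}^{∞} dt/|t−z|² + ∫_{−∞}^{b₀} dt/|t−z|² + ∑_j ∫_{x_j}^{b_j} dt/|t−z|²` holds. -/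
theorem stmt15 (g : ℕ) (b0 a0 : ℝ) (a b x : Fin g → ℝ) (x0 : ℝ)
    (hb0a0 : b0 < a0) (hlow : ∀ j, b0 < a j) (hab : ∀ j, a j < b j)
    (hord : ∀ j k : Fin g, j < k → b j < a k) (hhigh : ∀ j, b j < a0)
    (hx : ∀ j, x j ∈ Set.Ioo (a j) (b j)) (hx0 : a0 < x0)
    (z : ℂ) (hz : 0 < z.im) :
    (∃ r : ℝ, r < 0 ∧
      ((z - (a0 : ℂ)) * (z - (b0 : ℂ)) * ∏ j, (z - (a j : ℂ)) * (z - (b j : ℂ))) /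
        ((z - (x0 : ℂ)) * ∏ j, (z - (x j : ℂ))) ^ 2 = (r : ℂ)) ↔
    ((∫ t in a0..x0, 1 / ‖(t : ℂ) - z‖ ^ 2) +
        ∑ j, ∫ t in (a j)..(x j), 1 / ‖(t : ℂ) - z‖ ^ 2)
      = ((∫ t in Set.Ioi x0, 1 / ‖(t : ℂ) - z‖ ^ 2) +
          (∫ t in Set.Iic b0, 1 / ‖(t : ℂ) - z‖ ^ 2) +
          ∑ j, ∫ t in (x j)..(b j), 1 / ‖(t : ℂ) - z‖ ^ 2) :=
  stmt15_general g b0 a0 a b x x0 hb0a0 hlow hord hhigh hx hx0 z hz
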